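/- arXiv:1906.08656 — 2 statements merged into one kernel-verified Lean document; each statement's English description precedes it below -/
import Mathlib

section
/- Distribution-dependent regret bound for ELIM: suppose the best arm i* satisfies i* ≥ 2 and is unique (μ_{i*} > μ_i for all i ≠ i*). Let Δ_{(1)} ≥ Δ_{(2)} ≥ … ≥ Δ_{(i*)} = 0 be the decreasing rearrangement of the multiset {Δ_i : 1 ≤ i ≤ i*}, and let C = 8·ln(K·T²). Then the pseudo-regret of ELIM with horizon T satisfies R(T) ≤ Δ_{(1)} + C/Δ_{(1)} + C·∑_{i=2}^{i*−1} (1/Δ_{(i)}² − 1/Δ_{(i−1)}²)·Δ_{(i)} + 2. -/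
open MeasureTheory Finset

/-- Empirical mean of arm `i` after `t` rounds (rounds are 0-indexed: `X s` is the
reward vector of round `s + 1`). -/
noncomputable def empMean {K : ℕ} (X : ℕ → Fin K → ℝ) (t : ℕ) (i : Fin K) : ℝ :=
  (∑ s ∈ Finset.range t, X s i) / t

/-- The confidence radius `ρ_t = √(ln(K T²) / (2 (t-1)))`, with `ρ_1 = ∞`. -/
noncomputable def elimRho (K T t : ℕ) : EReal :=
  if t ≤ 1 then ⊤
  else ((Real.sqrt (Real.log ((K : ℝ) * (T : ℝ) ^ 2) / (2 * ((t : ℝ) - 1)))) : ℝ)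

open scoped Classical in
/-- The set `S_t` of surviving arms of the ELIM algorithm with `K` arms and horizon `T`:
`S_0 = [K]`, and `S_t` keeps exactly those arms of `S_{t-1}` whose empirical mean after
`t - 1` rounds is within `2 ρ_t` of the best empirical mean over `S_{t-1}`. -/
noncomputable def elimS (K T : ℕ) (X : ℕ → Fin K → ℝ) : ℕ → Finset (Fin K)
  | 0 => Finset.univ
  | t + 1 =>
      (elimS K T X t).filter fun i =>
        ∀ j ∈ elimS K T X t,
          ((empMean X t j - empMean X t i : ℝ) : EReal) ≤ 2 * elimRho K T (t + 1)

/-- The arm `I_t = min S_t` played by ELIM at round `t`. -/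
noncomputable def elimI (K T : ℕ) [NeZero K] (X : ℕ → Fin K → ℝ) (t : ℕ) : Fin K :=
  if h : (elimS K T X t).Nonempty then (elimS K T X t).min' h else 0

/-- Extend a reward matrix on `Fin T` rounds to all of `ℕ` (by junk values `0`). -/
noncomputable def extendRewards {K : ℕ} (T : ℕ) (ω : Fin T → Fin K → ℝ) :
    ℕ → Fin K → ℝ :=
  fun s => if h : s < T then ω ⟨s, h⟩ else 0

/-! On the event that every empirical mean stays within `√(ln(K T²) / (2 s))` of its mean after
each round `s ≤ T`, the best arm is never eliminated and every arm surviving round `s + 1` has gap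
at most `√(C / s)`. By Hoeffding's inequality and a union bound over the `K T` pairs (arm, round),
the complement of this event has probability at most `2 / T`, and there the regret is at most `T`.
On the event, ELIM plays the least surviving index, hence an arm `i ≤ i*`, whose gap is some
`D j`. Writing `D j` as the sum of the decrements `D i - D (i + 1)` over the levels `D i ≤ √(C / s)`
and exchanging the sums over rounds and levels, the decrement at level `i` is counted at most
`C / D i²` times; Abel summation turns `∑ (D i - D (i + 1)) C / D i²` into the stated bound. -/

section DecreasingSequence

lemma sum_Ico_sub_mul_eq {R : Type*} [CommRing R] (f g : ℕ → R) {n : ℕ} (hn : 2 ≤ n) :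
    ∑ i ∈ Ico 1 n, (f i - f (i + 1)) * g i
      = f 1 * g 1 + ∑ i ∈ Ico 2 n, f i * (g i - g (i - 1)) - f n * g (n - 1) := by
  induction n, hn using Nat.le_induction with
  | base =>
    simp only [Nat.Ico_succ_singleton, sum_singleton, Ico_self, sum_empty]
    ring
  | succ m hm ih =>
    rw [sum_Ico_succ_top (by omega), sum_Ico_succ_top hm, ih, Nat.add_sub_cancel]
    ring

variable {D : ℕ → ℝ} {n : ℕ}

lemma AntitoneOn.sub_add_one_nonneg (hD : AntitoneOn D (Set.Icc 1 n)) {i : ℕ} (hi : i ∈ Ico 1 n) :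
    0 ≤ D i - D (i + 1) := by
  rw [mem_Ico] at hi
  exact sub_nonneg.2 (hD ⟨hi.1, hi.2.le⟩ ⟨by omega, hi.2⟩ i.le_succ)

lemma le_sum_filter_sub_of_le (hD : AntitoneOn D (Set.Icc 1 n)) (hDn : D n = 0) {j : ℕ}
    (hj : j ∈ Icc 1 n) {x : ℝ} (hjx : D j ≤ x) :
    D j ≤ ∑ i ∈ (Ico 1 n).filter (D · ≤ x), (D i - D (i + 1)) := by
  rw [mem_Icc] at hj
  have htelescope : ∑ i ∈ Ico j n, (D i - D (i + 1)) = D j := by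
    simp_rw [← neg_sub (D (_ + 1)), sum_neg_distrib, sum_Ico_sub D hj.2, hDn]
    ring
  rw [← htelescope]
  refine sum_le_sum_of_subset_of_nonneg (fun i hi => ?_)
    (fun i hi _ => hD.sub_add_one_nonneg (mem_filter.1 hi).1)
  rw [mem_Ico] at hi
  exact mem_filter.2 ⟨mem_Ico.2 ⟨by omega, hi.2⟩,
    (hD ⟨hj.1, hj.2⟩ ⟨by omega, hi.2.le⟩ hi.1).trans hjx⟩

lemma card_filter_le_sqrt_div_le {C d : ℝ} (hC : 0 ≤ C) (hd : 0 < d) (N : ℕ) :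
    (#((range N).filter fun s : ℕ => d ≤ √(C / ↑(s + 1))) : ℝ) ≤ C / d ^ 2 := by
  have hsub : (range N).filter (fun s : ℕ => d ≤ √(C / ↑(s + 1))) ⊆ range ⌊C / d ^ 2⌋₊ := by
    intro s hs
    rw [mem_filter, Real.le_sqrt' hd, le_div_iff₀ (by positivity)] at hs
    rw [mem_range, ← Nat.succ_le_iff, Nat.le_floor_iff (by positivity), le_div_iff₀ (by positivity)]
    linarith [hs.2]
  calc (#((range N).filter fun s : ℕ => d ≤ √(C / ↑(s + 1))) : ℝ) ≤ #(range ⌊C / d ^ 2⌋₊) := by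
        exact_mod_cast card_le_card hsub
    _ ≤ C / d ^ 2 := by
        rw [card_range]
        exact Nat.floor_le (by positivity)

lemma sum_range_sum_filter_sub_le (hD : AntitoneOn D (Set.Icc 1 n)) (hDn : D n = 0)
    (hn : 2 ≤ n) (hpos : ∀ i ∈ Ico 1 n, 0 < D i) {C : ℝ} (hC : 0 ≤ C) (N : ℕ) :
    ∑ s ∈ range N, ∑ i ∈ (Ico 1 n).filter (D · ≤ √(C / ↑(s + 1))), (D i - D (i + 1))
      ≤ C / D 1 + C * ∑ i ∈ Icc 2 (n - 1), (1 / D i ^ 2 - 1 / D (i - 1) ^ 2) * D i := by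
  rw [sum_comm' (t' := Ico 1 n)
    (s' := fun i => (range N).filter fun s : ℕ => D i ≤ √(C / ↑(s + 1)))
    (by intro s i; simp only [mem_filter]; tauto)]
  calc ∑ i ∈ Ico 1 n, ∑ s ∈ (range N).filter (fun s : ℕ => D i ≤ √(C / ↑(s + 1))), (D i - D (i + 1))
      = ∑ i ∈ Ico 1 n, (D i - D (i + 1)) * #((range N).filter fun s : ℕ => D i ≤ √(C / ↑(s + 1))) := by
        simp only [sum_const, nsmul_eq_mul, mul_comm]
    _ ≤ ∑ i ∈ Ico 1 n, (D i - D (i + 1)) * (C / D i ^ 2) :=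
        sum_le_sum fun i hi => mul_le_mul_of_nonneg_left
          (card_filter_le_sqrt_div_le hC (hpos i hi) N) (hD.sub_add_one_nonneg hi)
    _ = C / D 1 + C * ∑ i ∈ Icc 2 (n - 1), (1 / D i ^ 2 - 1 / D (i - 1) ^ 2) * D i := by
        obtain ⟨m, rfl⟩ : ∃ m, n = m + 1 := ⟨n - 1, by omega⟩
        have hD1 : D 1 ≠ 0 := (hpos 1 (mem_Ico.2 ⟨le_rfl, by omega⟩)).ne'
        rw [sum_Ico_sub_mul_eq _ _ hn, hDn, zero_mul, sub_zero, Nat.add_sub_cancel,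
          ← Ico_add_one_right_eq_Icc, mul_sum]
        field_simp

end DecreasingSequence

section Rearrangement

variable {K n : ℕ} {σ : Equiv.Perm ℕ} {D : ℕ → ℝ} {g : Fin K → ℝ}

lemma exists_eq_of_rearrangement (hσ : ∀ j ∈ Icc 1 n, σ j ∈ Icc 1 n)
    (hD : ∀ j ∈ Icc 1 n, ∀ i : Fin K, (i : ℕ) + 1 = σ j → D j = g i) (i : Fin K)
    (hi : (i : ℕ) < n) : ∃ j ∈ Icc 1 n, D j = g i := by
  obtain ⟨j, hj, hσj⟩ := surjOn_of_injOn_of_card_le σ hσ σ.injective.injOn le_rfl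
    (show (i : ℕ) + 1 ∈ (Icc 1 n : Set ℕ) from mem_coe.2 (mem_Icc.2 ⟨by omega, hi⟩))
  exact ⟨j, hj, hD j hj i hσj.symm⟩

lemma pos_of_rearrangement (hσ : ∀ j ∈ Icc 1 n, σ j ∈ Icc 1 n)
    (hD : ∀ j ∈ Icc 1 n, ∀ i : Fin K, (i : ℕ) + 1 = σ j → D j = g i) (hnK : n ≤ K)
    (hDn : D n = 0) (hg : ∀ i : Fin K, (i : ℕ) + 1 < n → 0 < g i) {j : ℕ} (hj : j ∈ Ico 1 n) :
    0 < D j := by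
  have harm : ∀ k ∈ Icc 1 n, ∃ i : Fin K, (i : ℕ) + 1 = σ k ∧ σ k ≤ n := fun k hk => by
    have := mem_Icc.1 (hσ k hk)
    exact ⟨⟨σ k - 1, by omega⟩, by simp only; omega, this.2⟩
  have hn : n ∈ Icc 1 n := mem_Icc.2 ⟨by have := mem_Ico.1 hj; omega, le_rfl⟩
  have hσn : σ n = n := by
    obtain ⟨i, hi, hle⟩ := harm n hn
    by_contra hne
    have := hg i (by omega)
    rw [← hD n hn i hi, hDn] at this
    exact lt_irrefl 0 this
  have hjn : σ j ≠ n := fun h => by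
    have := σ.injective (h.trans hσn.symm)
    have := mem_Ico.1 hj
    omega
  obtain ⟨i, hi, hle⟩ := harm j (Ico_subset_Icc_self hj)
  rw [hD j (Ico_subset_Icc_self hj) i hi]
  exact hg i (by omega)

lemma le_apply_one_of_rearrangement (hσ : ∀ j ∈ Icc 1 n, σ j ∈ Icc 1 n)
    (hD : ∀ j ∈ Icc 1 n, ∀ i : Fin K, (i : ℕ) + 1 = σ j → D j = g i)
    (hanti : AntitoneOn D (Set.Icc 1 n)) (i : Fin K) (hi : (i : ℕ) < n) : g i ≤ D 1 := by
  obtain ⟨j, hj, hDj⟩ := exists_eq_of_rearrangement hσ hD i hi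
  exact hDj ▸ hanti ⟨le_rfl, by omega⟩ (mem_Icc.1 hj) (mem_Icc.1 hj).1

lemma le_sum_filter_sub_of_rearrangement (hσ : ∀ j ∈ Icc 1 n, σ j ∈ Icc 1 n)
    (hD : ∀ j ∈ Icc 1 n, ∀ i : Fin K, (i : ℕ) + 1 = σ j → D j = g i)
    (hanti : AntitoneOn D (Set.Icc 1 n)) (hDn : D n = 0) (i : Fin K) (hi : (i : ℕ) < n) {x : ℝ}
    (hx : g i ≤ x) : g i ≤ ∑ j ∈ (Ico 1 n).filter (D · ≤ x), (D j - D (j + 1)) := by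
  obtain ⟨j, hj, hDj⟩ := exists_eq_of_rearrangement hσ hD i hi
  exact hDj ▸ le_sum_filter_sub_of_le hanti hDn hj (hDj ▸ hx)

end Rearrangement

section Elim

/-- The radius `ρ_{s+1}` that ELIM uses after `s` rounds (see `two_mul_elimRho_add_one`). -/
noncomputable def confRadius (K T s : ℕ) : ℝ := √(Real.log (K * T ^ 2) / (2 * s))

lemma two_mul_elimRho_add_one (K T : ℕ) {t : ℕ} (ht : 1 ≤ t) :
    2 * elimRho K T (t + 1) = ((2 * confRadius K T t : ℝ) : EReal) := by
  rw [elimRho, if_neg (by omega), confRadius, EReal.coe_mul, Nat.cast_add_one,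
    add_sub_cancel_right]
  rfl

lemma four_mul_confRadius (K T s : ℕ) :
    4 * confRadius K T s = √(8 * Real.log (K * T ^ 2) / s) := by
  rw [confRadius, show 8 * Real.log (K * T ^ 2) / s = 4 ^ 2 * (Real.log (K * T ^ 2) / (2 * s)) by
    ring, Real.sqrt_mul (by norm_num), Real.sqrt_sq (by norm_num)]

lemma elimS_one (K T : ℕ) (X : ℕ → Fin K → ℝ) : elimS K T X 1 = univ := by
  simp [elimS, elimRho, EReal.mul_top_of_pos]

variable {K T : ℕ} {X : ℕ → Fin K → ℝ} {μ : Fin K → ℝ} {iStar : Fin K}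

lemma elimS_add_one_of_abs_empMean_sub_le {t : ℕ} (ht : 1 ≤ t) (hmax : ∀ i, μ i ≤ μ iStar)
    (hX : ∀ i, |empMean X t i - μ i| ≤ confRadius K T t) (hstar : iStar ∈ elimS K T X t) :
    iStar ∈ elimS K T X (t + 1) ∧
      ∀ i ∈ elimS K T X (t + 1), μ iStar - μ i ≤ 4 * confRadius K T t := by
  simp only [elimS, mem_filter, two_mul_elimRho_add_one K T ht, EReal.coe_le_coe_iff]
  have hstar' := abs_le.1 (hX iStar)
  refine ⟨⟨hstar, fun j _ => ?_⟩, fun i hi => ?_⟩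
  · linarith [abs_le.1 (hX j), hmax j]
  · linarith [abs_le.1 (hX i), hi.2 iStar hstar]

lemma mem_elimS_of_forall_abs_empMean_sub_le (hmax : ∀ i, μ i ≤ μ iStar)
    (hX : ∀ s ∈ Icc 1 T, ∀ i, |empMean X s i - μ i| ≤ confRadius K T s) {t : ℕ}
    (ht : t ≤ T + 1) : iStar ∈ elimS K T X t := by
  induction t with
  | zero => simp [elimS]
  | succ t ih =>
    rcases Nat.eq_zero_or_pos t with rfl | ht1
    · simp [elimS_one]
    · exact (elimS_add_one_of_abs_empMean_sub_le ht1 hmax (hX t (mem_Icc.2 ⟨ht1, by omega⟩))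
        (ih (by omega))).1

variable [NeZero K] {t : ℕ}

lemma elimI_le {i : Fin K} (hi : i ∈ elimS K T X t) : elimI K T X t ≤ i := by
  rw [elimI, dif_pos ⟨i, hi⟩]
  exact min'_le _ _ hi

lemma elimI_mem (h : (elimS K T X t).Nonempty) : elimI K T X t ∈ elimS K T X t := by
  rw [elimI, dif_pos h]
  exact min'_mem _ _

lemma sum_Icc_one_eq_add_sum_range {M : Type*} [AddCommMonoid M] (f : ℕ → M) {N : ℕ}
    (hN : 1 ≤ N) : ∑ t ∈ Icc 1 N, f t = f 1 + ∑ s ∈ range (N - 1), f (s + 2) := by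
  obtain ⟨N, rfl⟩ : ∃ m, N = m + 1 := ⟨N - 1, by omega⟩
  rw [← Ico_add_one_right_eq_Icc, sum_Ico_eq_sum_range, Nat.add_sub_cancel, sum_range_succ',
    add_comm, Nat.add_sub_cancel]
  exact congrArg₂ (· + ·) rfl (sum_congr rfl fun k _ => congrArg f (by omega))

lemma sum_gap_elimI_le (hmax : ∀ i, μ i ≤ μ iStar)
    (hX : ∀ s ∈ Icc 1 T, ∀ i, |empMean X s i - μ i| ≤ confRadius K T s) (hT : 1 ≤ T) {a : ℝ}
    (ha : ∀ i ≤ iStar, μ iStar - μ i ≤ a) {φ : ℝ → ℝ}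
    (hφ : ∀ i ≤ iStar, ∀ x, μ iStar - μ i ≤ x → μ iStar - μ i ≤ φ x) :
    ∑ t ∈ Icc 1 T, (μ iStar - μ (elimI K T X t))
      ≤ a + ∑ s ∈ range (T - 1), φ (4 * confRadius K T (s + 1)) := by
  have hstar {t : ℕ} (ht : t ≤ T + 1) := mem_elimS_of_forall_abs_empMean_sub_le hmax hX ht
  rw [sum_Icc_one_eq_add_sum_range _ hT]
  gcongr with s hs
  · exact ha _ (elimI_le (hstar (by omega)))
  · have hsT : s + 2 ≤ T := by have := mem_range.1 hs; omega
    refine hφ _ (elimI_le (hstar (by omega))) _ ?_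
    exact (elimS_add_one_of_abs_empMean_sub_le (by omega) hmax (hX _ (mem_Icc.2 ⟨by omega,
      by omega⟩)) (hstar (by omega))).2 _ (elimI_mem ⟨iStar, hstar (by omega)⟩)

end Elim

section Concentration

open ProbabilityTheory Real

variable {α ι : Type*} [MeasurableSpace α] [Fintype ι] {ν : Measure α} [IsProbabilityMeasure ν]

lemma measureReal_le_sum_comp_eval_le {g : α → ℝ} {c : NNReal} (hg : HasSubgaussianMGF g c ν)
    (S : Finset ι) {ε : ℝ} (hε : 0 ≤ ε) :
    (Measure.pi fun _ : ι => ν).real {ω | ε ≤ ∑ u ∈ S, g (ω u)}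
      ≤ exp (-ε ^ 2 / (2 * (#S * c))) := by
  have hsubG (u : ι) :
      HasSubgaussianMGF (fun ω : ι → α => g (ω u)) c (Measure.pi fun _ => ν) :=
    HasSubgaussianMGF.of_map (Y := Function.eval u) (measurable_pi_apply u).aemeasurable
      (by rwa [(measurePreserving_eval _ u).map_eq])
  simpa using HasSubgaussianMGF.measure_sum_ge_le_of_iIndepFun
    (iIndepFun_pi (X := fun _ => g) fun _ => hg.aemeasurable) (fun u _ => hsubG u) hε

lemma measureReal_le_abs_sum_sub_integral_le {f : α → ℝ} (hf : AEMeasurable f ν)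
    (hb : ∀ᵐ x ∂ν, f x ∈ Set.Icc 0 1) (S : Finset ι) {ε : ℝ} (hε : 0 ≤ ε) :
    (Measure.pi fun _ : ι => ν).real {ω | ε ≤ |∑ u ∈ S, (f (ω u) - ∫ x, f x ∂ν)|}
      ≤ 2 * exp (-2 * ε ^ 2 / #S) := by
  have hbound {g : α → ℝ} (hg : HasSubgaussianMGF g ((‖(1 : ℝ) - 0‖₊ / 2) ^ 2) ν) :
      (Measure.pi fun _ : ι => ν).real {ω | ε ≤ ∑ u ∈ S, g (ω u)} ≤ exp (-2 * ε ^ 2 / #S) := by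
    refine (measureReal_le_sum_comp_eval_le hg S hε).trans_eq ?_
    congr 1
    simp only [sub_zero, nnnorm_one, NNReal.coe_div, NNReal.coe_pow, NNReal.coe_one,
      NNReal.coe_ofNat]
    ring
  have hg := hasSubgaussianMGF_of_mem_Icc hf hb
  have hupper := hbound hg
  have hlower := hbound hg.neg
  simp only [Pi.neg_apply, sum_neg_distrib] at hupper hlower
  calc (Measure.pi fun _ : ι => ν).real {ω | ε ≤ |∑ u ∈ S, (f (ω u) - ∫ x, f x ∂ν)|}
      ≤ (Measure.pi fun _ : ι => ν).real ({ω | ε ≤ ∑ u ∈ S, (f (ω u) - ∫ x, f x ∂ν)}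
          ∪ {ω | ε ≤ -∑ u ∈ S, (f (ω u) - ∫ x, f x ∂ν)}) :=
        measureReal_mono fun ω hω => by simpa [le_abs] using hω
    _ ≤ 2 * exp (-2 * ε ^ 2 / #S) := by
        linarith [measureReal_union_le (μ := Measure.pi fun _ : ι => ν)
          {ω | ε ≤ ∑ u ∈ S, (f (ω u) - ∫ x, f x ∂ν)}
          {ω | ε ≤ -∑ u ∈ S, (f (ω u) - ∫ x, f x ∂ν)}]

end Concentration

def elimGoodEvent (K T : ℕ) (μ : Fin K → ℝ) : Set (Fin T → Fin K → ℝ) :=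
  {ω | ∀ s ∈ Icc 1 T, ∀ i, |empMean (extendRewards T ω) s i - μ i| ≤ confRadius K T s}

section GoodEvent

open Real

variable {K T : ℕ}

lemma sum_range_extendRewards {s : ℕ} (hs : s ≤ T) (ω : Fin T → Fin K → ℝ)
    (f : (Fin K → ℝ) → ℝ) :
    ∑ k ∈ range s, f (extendRewards T ω k)
      = ∑ u ∈ (range s).attachFin (fun _ hk => (mem_range.1 hk).trans_le hs), f (ω u) := by
  have h := sum_image (f := fun k => f (extendRewards T ω k)) (g := Fin.val)
    (s := (range s).attachFin (fun _ hk => (mem_range.1 hk).trans_le hs)) Fin.val_injective.injOn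
  rw [image_val_attachFin] at h
  rw [h]
  refine sum_congr rfl fun u _ => ?_
  simp [extendRewards]

lemma log_card_mul_sq_nonneg (K T : ℕ) [NeZero K] (hT : 1 ≤ T) : 0 ≤ Real.log (K * T ^ 2) := by
  refine Real.log_nonneg (one_le_mul_of_one_le_of_one_le ?_ (one_le_pow₀ ?_)) <;>
    norm_cast
  exact NeZero.one_le

lemma measureReal_confRadius_lt_abs_empMean_sub_le [NeZero K] {ν : Measure (Fin K → ℝ)}
    [IsProbabilityMeasure ν] (hsupp : ∀ᵐ x ∂ν, ∀ i, x i ∈ Set.Icc (0 : ℝ) 1) {s : ℕ}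
    (hs : s ∈ Icc 1 T) (i : Fin K) :
    (Measure.pi fun _ : Fin T => ν).real
        {ω | confRadius K T s < |empMean (extendRewards T ω) s i - ∫ x, x i ∂ν|}
      ≤ 2 / (K * T ^ 2) := by
  obtain ⟨hs1, hsT⟩ := mem_Icc.1 hs
  set S := (range s).attachFin (fun _ hk => (mem_range.1 hk).trans_le hsT)
  set m := ∫ x, x i ∂ν
  have hS : #S = s := by simp [S]
  have hs0 : (0 : ℝ) < s := by exact_mod_cast hs1
  have hT0 : (0 : ℝ) < T := by exact_mod_cast (by omega : 0 < T)
  have hlog := log_card_mul_sq_nonneg K T (by omega)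
  have hempMean (ω : Fin T → Fin K → ℝ) :
      |empMean (extendRewards T ω) s i - m| = |∑ u ∈ S, (ω u i - m)| / s := by
    have hsum : ∑ k ∈ range s, extendRewards T ω k i = ∑ u ∈ S, ω u i :=
      sum_range_extendRewards hsT ω (· i)
    rw [empMean, hsum, sum_sub_distrib, sum_const, hS, nsmul_eq_mul, ← abs_of_pos hs0,
      ← abs_div, abs_of_pos hs0, sub_div, mul_div_cancel_left₀ _ hs0.ne']
  calc (Measure.pi fun _ : Fin T => ν).real
        {ω | confRadius K T s < |empMean (extendRewards T ω) s i - m|}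
      ≤ (Measure.pi fun _ : Fin T => ν).real
        {ω | s * confRadius K T s ≤ |∑ u ∈ S, (ω u i - m)|} := by
        refine measureReal_mono fun ω hω => ?_
        have h : confRadius K T s < |∑ u ∈ S, (ω u i - m)| / s := (hempMean ω) ▸ hω
        rw [lt_div_iff₀ hs0] at h
        exact (by linarith : s * confRadius K T s ≤ |∑ u ∈ S, (ω u i - m)|)
    _ ≤ 2 * exp (-2 * (s * confRadius K T s) ^ 2 / #S) :=
        measureReal_le_abs_sum_sub_integral_le (ι := Fin T) (ν := ν) (f := fun x => x i)
          (measurable_pi_apply i).aemeasurable (hsupp.mono fun x hx => hx i) S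
          (by unfold confRadius; positivity)
    _ = 2 / (K * T ^ 2) := by
        have hKT : 0 < (K : ℝ) * T ^ 2 := by
          have : (0 : ℝ) < K := by exact_mod_cast NeZero.pos K
          positivity
        rw [hS, mul_pow, confRadius, Real.sq_sqrt (by positivity),
          show -2 * (s ^ 2 * (Real.log (K * T ^ 2) / (2 * s))) / s = -Real.log (K * T ^ 2) by
            field_simp, exp_neg, exp_log hKT]
        ring

lemma measurable_empMean_extendRewards (s : ℕ) (i : Fin K) :
    Measurable fun ω : Fin T → Fin K → ℝ => empMean (extendRewards T ω) s i := by
  refine Measurable.div_const (Finset.measurable_sum _ fun k _ => ?_) _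
  unfold extendRewards
  split_ifs
  · fun_prop
  · exact measurable_const

lemma measurableSet_elimGoodEvent (μ : Fin K → ℝ) : MeasurableSet (elimGoodEvent K T μ) := by
  simp only [elimGoodEvent, Set.ofPred_forall]
  exact .iInter fun s => .iInter fun _ => .iInter fun i =>
    measurableSet_le ((measurable_empMean_extendRewards s i).sub_const _).abs measurable_const

lemma measureReal_compl_elimGoodEvent_le [NeZero K] (hT : 1 ≤ T) {ν : Measure (Fin K → ℝ)}
    [IsProbabilityMeasure ν] (hsupp : ∀ᵐ x ∂ν, ∀ i, x i ∈ Set.Icc (0 : ℝ) 1)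
    {μ : Fin K → ℝ} (hμ : ∀ i, μ i = ∫ x, x i ∂ν) :
    (Measure.pi fun _ : Fin T => ν).real (elimGoodEvent K T μ)ᶜ ≤ 2 / T := by
  have hcompl : (elimGoodEvent K T μ)ᶜ = ⋃ s ∈ Icc 1 T, ⋃ i ∈ (univ : Finset (Fin K)),
      {ω | confRadius K T s < |empMean (extendRewards T ω) s i - ∫ x, x i ∂ν|} := by
    ext ω
    simp [elimGoodEvent, hμ, and_assoc]
  rw [hcompl]
  calc _ ≤ ∑ s ∈ Icc 1 T, ∑ i ∈ (univ : Finset (Fin K)), (Measure.pi fun _ : Fin T => ν).real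
          {ω | confRadius K T s < |empMean (extendRewards T ω) s i - ∫ x, x i ∂ν|} :=
        (measureReal_biUnion_finset_le _ _).trans
          (sum_le_sum fun s _ => measureReal_biUnion_finset_le _ _)
    _ ≤ ∑ s ∈ Icc 1 T, ∑ i ∈ (univ : Finset (Fin K)), 2 / ((K : ℝ) * T ^ 2) :=
        sum_le_sum fun s hs => sum_le_sum fun i _ =>
          measureReal_confRadius_lt_abs_empMean_sub_le hsupp hs i
    _ = 2 / T := by
        have : (K : ℝ) ≠ 0 := NeZero.ne _
        have : (T : ℝ) ≠ 0 := by positivity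
        simp only [sum_const, card_univ, Fintype.card_fin, Nat.card_Icc, add_tsub_cancel_right,
          nsmul_eq_mul]
        field_simp

end GoodEvent

section Expectation

variable {Ω : Type*} [MeasurableSpace Ω] {P : Measure Ω} [IsProbabilityMeasure P]

lemma integral_mem_Icc_of_ae_mem_Icc {f : Ω → ℝ} (hf : AEMeasurable f P) {a b : ℝ}
    (hb : ∀ᵐ ω ∂P, f ω ∈ Set.Icc a b) : ∫ ω, f ω ∂P ∈ Set.Icc a b := by
  have hint := Integrable.of_mem_Icc a b hf hb
  constructor
  · simpa using integral_mono_ae (integrable_const a) hint (hb.mono fun _ h => h.1)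
  · simpa using integral_mono_ae hint (integrable_const b) (hb.mono fun _ h => h.2)

lemma integral_le_add_mul_measureReal_compl {f : Ω → ℝ} {G : Set Ω} {a b : ℝ}
    (hG : MeasurableSet G) (hf : 0 ≤ f) (ha : 0 ≤ a) (hfG : ∀ ω ∈ G, f ω ≤ a)
    (hfb : ∀ ω, f ω ≤ b) : ∫ ω, f ω ∂P ≤ a + b * P.real Gᶜ := by
  have hint : Integrable (fun ω => a + Gᶜ.indicator (fun _ => b) ω) P :=
    (integrable_const a).add ((integrable_const b).indicator hG.compl)
  calc ∫ ω, f ω ∂P ≤ ∫ ω, (a + Gᶜ.indicator (fun _ => b) ω) ∂P := by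
        refine integral_mono_of_nonneg (ae_of_all _ hf) hint (ae_of_all _ fun ω => ?_)
        by_cases hω : ω ∈ G
        · simpa [hω] using hfG ω hω
        · simpa [hω] using (hfb ω).trans (le_add_of_nonneg_left ha)
    _ = a + b * P.real Gᶜ := by
        rw [integral_add (integrable_const a) ((integrable_const b).indicator hG.compl),
          integral_const, integral_indicator_const _ hG.compl]
        simp [mul_comm]

end Expectation

/-- **Distribution dependent regret bound.** Suppose the best arm `iStar` is unique and
has (1-indexed) position at least `2`.  Let `D 1 ≥ D 2 ≥ … ≥ D n = 0` (with
`n = iStar.val + 1` the 1-indexed position of the best arm) be the decreasing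
rearrangement, via the permutation `σ`, of the gaps `Δ_i = μ_{i*} - μ_i` of the arms
`i ≤ iStar`, and let `C = 8 ln(K T²)`.  Then the pseudo-regret of ELIM with horizon `T`
is at most `D 1 + C / D 1 + C ∑_{i=2}^{n-1} (1/(D i)² - 1/(D (i-1))²) D i + 2`. -/
theorem elim_distribution_dependent_regret
    (K T : ℕ) [NeZero K] (hT : 1 ≤ T)
    (ν : Measure (Fin K → ℝ)) [IsProbabilityMeasure ν]
    (hsupp : ∀ᵐ x ∂ν, ∀ i, x i ∈ Set.Icc (0 : ℝ) 1)
    (μ : Fin K → ℝ) (hμ : ∀ i, μ i = ∫ x, x i ∂ν)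
    (iStar : Fin K) (hstar : ∀ i, i ≠ iStar → μ i < μ iStar)
    (hpos : 1 ≤ iStar.val)
    (n : ℕ) (hn : n = iStar.val + 1)
    (σ : Equiv.Perm ℕ) (hσ : ∀ i ∈ Finset.Icc 1 n, σ i ∈ Finset.Icc 1 n)
    (D : ℕ → ℝ)
    (hD : ∀ i, ∀ hi : i ∈ Finset.Icc 1 n,
      D i = μ iStar - μ ⟨σ i - 1, by
        have h1 := hσ i hi
        rw [Finset.mem_Icc] at h1
        have h2 := iStar.isLt
        omega⟩)
    (hanti : ∀ i j, 1 ≤ i → i ≤ j → j ≤ n → D j ≤ D i)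
    (hlast : D n = 0)
    (C : ℝ) (hC : C = 8 * Real.log ((K : ℝ) * (T : ℝ) ^ 2)) :
    (∫ ω, (∑ t ∈ Finset.Icc 1 T, (μ iStar - μ (elimI K T (extendRewards T ω) t)))
        ∂(Measure.pi fun _ : Fin T => ν))
      ≤ D 1 + C / D 1
          + C * ∑ i ∈ Finset.Icc 2 (n - 1),
              (1 / (D i) ^ 2 - 1 / (D (i - 1)) ^ 2) * D i
          + 2 := by
  have hmax : ∀ i, μ i ≤ μ iStar := fun i => by
    rcases eq_or_ne i iStar with rfl | h
    exacts [le_rfl, (hstar i h).le]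
  have hgap01 (i : Fin K) : 0 ≤ μ iStar - μ i ∧ μ iStar - μ i ≤ 1 := by
    have hμ01 (j : Fin K) : μ j ∈ Set.Icc 0 1 := hμ j ▸ integral_mem_Icc_of_ae_mem_Icc
      (measurable_pi_apply j).aemeasurable (hsupp.mono fun x hx => hx j)
    exact ⟨sub_nonneg.2 (hmax i), by linarith [(hμ01 i).1, (hμ01 iStar).2]⟩
  have hD' : ∀ j ∈ Icc 1 n, ∀ i : Fin K, (i : ℕ) + 1 = σ j → D j = μ iStar - μ i :=
    fun j hj i hi => by
      rw [hD j hj]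
      congr
      omega
  have hanti' : AntitoneOn D (Set.Icc 1 n) := fun i hi j hj hij => hanti i j hi.1 hij hj.2
  have hDpos : ∀ j ∈ Ico 1 n, 0 < D j := fun j hj => pos_of_rearrangement hσ hD' (by omega) hlast
    (fun i hi => sub_pos.2 (hstar i fun h => by subst h; omega)) hj
  have hC0 : 0 ≤ C := hC ▸ mul_nonneg (by norm_num) (log_card_mul_sq_nonneg K T hT)
  set layer : ℝ → ℝ := fun x => ∑ j ∈ (Ico 1 n).filter (D · ≤ x), (D j - D (j + 1))
  have hround1 (i : Fin K) (hi : i ≤ iStar) : μ iStar - μ i ≤ D 1 :=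
    le_apply_one_of_rearrangement hσ hD' hanti' i (by omega)
  have hlayer (i : Fin K) (hi : i ≤ iStar) (x : ℝ) (hx : μ iStar - μ i ≤ x) :
      μ iStar - μ i ≤ layer x :=
    le_sum_filter_sub_of_rearrangement hσ hD' hanti' hlast i (by omega) hx
  set a := D 1 + ∑ s ∈ range (T - 1), layer √(C / ↑(s + 1))
  have ha : 0 ≤ a := add_nonneg (hDpos 1 (mem_Ico.2 ⟨le_rfl, by omega⟩)).le
    (sum_nonneg fun s _ => sum_nonneg fun j hj => hanti'.sub_add_one_nonneg (mem_filter.1 hj).1)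
  have hgood : ∀ ω ∈ elimGoodEvent K T μ,
      ∑ t ∈ Icc 1 T, (μ iStar - μ (elimI K T (extendRewards T ω) t)) ≤ a := fun ω hω => by
    simpa only [four_mul_confRadius, ← hC] using sum_gap_elimI_le hmax hω hT hround1 hlayer
  have hbad := measureReal_compl_elimGoodEvent_le hT hsupp hμ
  rw [le_div_iff₀ (by exact_mod_cast hT), mul_comm] at hbad
  calc _ ≤ a + T * (Measure.pi fun _ : Fin T => ν).real (elimGoodEvent K T μ)ᶜ :=
        integral_le_add_mul_measureReal_compl (measurableSet_elimGoodEvent μ)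
          (fun ω => sum_nonneg fun t _ => (hgap01 _).1) ha hgood
          (fun ω => (sum_le_sum fun t _ => (hgap01 _).2).trans (by simp))
    _ ≤ _ := by
        linarith [sum_range_sum_filter_sub_le hanti' hlast (by omega) hDpos hC0 (T - 1)]
end

section
/- The procedure is nice at all rounds with high probability: in the ELIM algorithm with horizon T on K arms, let N_t^p be the event that i* ∈ S_t and μ_{i*} − μ_i ≤ 4ρ_t for all i ∈ S_t, and let M_t = ∩_{s=1}^t N_s^p. Then for every t with 1 ≤ t ≤ T, Pr{¬M_t} ≤ 2/T. -/
/-!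
On the event that, for every arm `i` and every `1 ≤ s < t`, the empirical mean of `i` after `s`
rounds lies within `ρ_{s+1}` of `μ_i`, an induction on the round shows that the best arm is never
eliminated and that every surviving arm is `4ρ`-optimal. By Hoeffding's inequality each of the
`K (t - 1)` exceptional events has probability at most `2 exp (-2 s ρ_{s+1}²) = 2 / (K T²)`, so a
union bound gives `Pr{¬ M_t} ≤ 2 (t - 1) / T² ≤ 2 / T`.
-/

open MeasureTheory Finset

open ProbabilityTheory Real
open scoped NNReal

lemma measureReal_abs_sum_ge_le_of_iIndepFun {Ω ι : Type*} {mΩ : MeasurableSpace Ω}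
    {P : Measure Ω} {X : ι → Ω → ℝ} (h_indep : iIndepFun X P) {c : ι → ℝ≥0} {s : Finset ι}
    (h_subG : ∀ i ∈ s, HasSubgaussianMGF (X i) (c i) P) {ε : ℝ} (hε : 0 ≤ ε) :
    P.real {ω | ε ≤ |∑ i ∈ s, X i ω|} ≤ 2 * exp (-ε ^ 2 / (2 * ∑ i ∈ s, c i)) := by
  have : IsProbabilityMeasure P := h_indep.isProbabilityMeasure
  have h_upper := HasSubgaussianMGF.measure_sum_ge_le_of_iIndepFun h_indep h_subG hε
  have h_lower := HasSubgaussianMGF.measure_sum_ge_le_of_iIndepFun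
    (h_indep.comp (fun _ x => -x) fun _ => measurable_neg) (fun i hi => (h_subG i hi).neg) hε
  have h_split : {ω | ε ≤ |∑ i ∈ s, X i ω|}
      ⊆ {ω | ε ≤ ∑ i ∈ s, X i ω} ∪ {ω | ε ≤ ∑ i ∈ s, ((fun x => -x) ∘ X i) ω} := by
    intro ω hω
    simpa [le_abs] using hω
  calc P.real {ω | ε ≤ |∑ i ∈ s, X i ω|}
      ≤ P.real {ω | ε ≤ ∑ i ∈ s, X i ω} + P.real {ω | ε ≤ ∑ i ∈ s, ((fun x => -x) ∘ X i) ω} :=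
        (measureReal_mono h_split).trans (measureReal_union_le _ _)
    _ ≤ 2 * exp (-ε ^ 2 / (2 * ∑ i ∈ s, c i)) := by linarith

lemma sum_range_extendRewards_s5 {K T s : ℕ} (hs : s ≤ T) (ω : Fin T → Fin K → ℝ) (i : Fin K) :
    ∑ m ∈ range s, extendRewards T ω m i = ∑ j : Fin s, ω (Fin.castLE hs j) i := by
  rw [Finset.sum_range]
  refine Finset.sum_congr rfl fun j _ => ?_
  simp [extendRewards, Fin.castLE, j.isLt.trans_le hs]

lemma hasSubgaussianMGF_coord_sub_integral {K T : ℕ} {ν : Measure (Fin K → ℝ)}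
    [IsProbabilityMeasure ν] {i : Fin K} (hsupp : ∀ᵐ x ∂ν, x i ∈ Set.Icc (0 : ℝ) 1) (j : Fin T) :
    HasSubgaussianMGF (fun ω : Fin T → Fin K → ℝ => ω j i - ∫ x, x i ∂ν) (1 / 4)
      (Measure.pi fun _ => ν) := by
  have h : HasSubgaussianMGF (fun x : Fin K → ℝ => x i - ∫ x, x i ∂ν) (1 / 4) ν := by
    convert hasSubgaussianMGF_of_mem_Icc (measurable_pi_apply i).aemeasurable hsupp using 1
    norm_num
  have h_map := (measurePreserving_eval (fun _ : Fin T => ν) j).map_eq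
  exact HasSubgaussianMGF.of_map (Y := Function.eval j) (measurable_pi_apply j).aemeasurable
    (by rwa [h_map])

lemma measureReal_lt_abs_empMean_sub_le {K T : ℕ} {ν : Measure (Fin K → ℝ)}
    [IsProbabilityMeasure ν] {i : Fin K} (hsupp : ∀ᵐ x ∂ν, x i ∈ Set.Icc (0 : ℝ) 1)
    {s : ℕ} (hs : s ≤ T) (hs0 : 0 < s) {r : ℝ} (hr : 0 ≤ r) :
    (Measure.pi fun _ : Fin T => ν).real
        {ω | r < |empMean (extendRewards T ω) s i - ∫ x, x i ∂ν|}
      ≤ 2 * exp (-2 * s * r ^ 2) := by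
  set m := ∫ x, x i ∂ν
  have h_indep : iIndepFun (fun (j : Fin s) (ω : Fin T → Fin K → ℝ) => ω (Fin.castLE hs j) i - m)
      (Measure.pi fun _ => ν) :=
    (iIndepFun_pi (mΩ := fun _ => inferInstance) (μ := fun _ => ν)
      (X := fun (_ : Fin T) (x : Fin K → ℝ) => x i - m)
      fun _ => (by fun_prop : Measurable fun x : Fin K → ℝ => x i - m).aemeasurable).precomp
      (Fin.castLE_injective hs)
  have h_sum (ω : Fin T → Fin K → ℝ) : ∑ j : Fin s, (ω (Fin.castLE hs j) i - m)
      = s * (empMean (extendRewards T ω) s i - m) := by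
    rw [Finset.sum_sub_distrib, ← sum_range_extendRewards_s5, empMean]
    simp only [Finset.sum_const, Finset.card_univ, Fintype.card_fin, nsmul_eq_mul]
    field_simp
  have h_hoeffding := measureReal_abs_sum_ge_le_of_iIndepFun h_indep (s := Finset.univ)
    (fun j _ => hasSubgaussianMGF_coord_sub_integral hsupp _) (by positivity : (0 : ℝ) ≤ s * r)
  calc _ ≤ (Measure.pi fun _ : Fin T => ν).real
        {ω | s * r ≤ |∑ j : Fin s, (ω (Fin.castLE hs j) i - m)|} := by
        refine measureReal_mono fun ω hω => ?_
        simp only [Set.mem_ofPred_eq, h_sum, abs_mul, Nat.abs_cast] at hω ⊢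
        exact mul_le_mul_of_nonneg_left hω.le (Nat.cast_nonneg s)
    _ ≤ _ := h_hoeffding.trans_eq ?_
  congr 2
  simp only [Finset.sum_const, Finset.card_univ, Fintype.card_fin, nsmul_eq_mul, NNReal.coe_mul,
    NNReal.coe_natCast, NNReal.coe_div, NNReal.coe_one, NNReal.coe_ofNat]
  field_simp
  ring

noncomputable def elimRadius (K T s : ℕ) : ℝ :=
  √(Real.log ((K : ℝ) * (T : ℝ) ^ 2) / (2 * (s : ℝ)))

lemma elimRho_succ (K T : ℕ) {s : ℕ} (hs : 1 ≤ s) :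
    elimRho K T (s + 1) = (elimRadius K T s : EReal) := by
  rw [elimRho, if_neg (by omega), elimRadius]
  push_cast
  ring_nf

lemma exp_neg_two_mul_elimRadius_sq {K T s : ℕ} (hK : 0 < K) (hT : 0 < T) (hs : 0 < s) :
    exp (-2 * s * elimRadius K T s ^ 2) = 1 / (K * T ^ 2) := by
  have hKT : (1 : ℝ) ≤ K * T ^ 2 := by
    have : 1 ≤ K * T ^ 2 := Nat.one_le_iff_ne_zero.mpr (by positivity)
    exact_mod_cast this
  have hs' : (0 : ℝ) < s := by exact_mod_cast hs
  rw [elimRadius, sq_sqrt (by have := Real.log_nonneg hKT; positivity)]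
  rw [show -2 * (s : ℝ) * (Real.log (K * T ^ 2) / (2 * s)) = -Real.log (K * T ^ 2) by
    field_simp, exp_neg, exp_log (by linarith), one_div]

/-- The event `N_s^p`. -/
def ElimNice (K T : ℕ) (X : ℕ → Fin K → ℝ) (μ : Fin K → ℝ) (iStar : Fin K) (s : ℕ) : Prop :=
  iStar ∈ elimS K T X s ∧
    ∀ i ∈ elimS K T X s, ((μ iStar - μ i : ℝ) : EReal) ≤ 4 * elimRho K T s

lemma elimNice_one (K T : ℕ) (X : ℕ → Fin K → ℝ) (μ : Fin K → ℝ) (iStar : Fin K) :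
    ElimNice K T X μ iStar 1 := by
  have hρ : elimRho K T 1 = ⊤ := by rw [elimRho, if_pos le_rfl]
  refine ⟨?_, fun i _ => ?_⟩
  · simp [elimS, hρ, EReal.mul_top_of_pos]
  · simp [hρ, EReal.mul_top_of_pos]

lemma coe_le_mul_elimRho_succ_iff {K T s : ℕ} (hs : 1 ≤ s) (a c : ℝ) :
    (a : EReal) ≤ (c : EReal) * elimRho K T (s + 1) ↔ a ≤ c * elimRadius K T s := by
  rw [elimRho_succ K T hs, ← EReal.coe_mul, EReal.coe_le_coe_iff]

lemma elimNice_succ {K T : ℕ} {X : ℕ → Fin K → ℝ} {μ : Fin K → ℝ} {iStar : Fin K}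
    (hstar : ∀ i, μ i ≤ μ iStar) {s : ℕ} (hs : 1 ≤ s) (hmem : iStar ∈ elimS K T X s)
    (hgood : ∀ i, |empMean X s i - μ i| ≤ elimRadius K T s) :
    ElimNice K T X μ iStar (s + 1) := by
  classical
  have hS : elimS K T X (s + 1) = (elimS K T X s).filter fun i => ∀ j ∈ elimS K T X s,
      empMean X s j - empMean X s i ≤ 2 * elimRadius K T s := by
    rw [elimS]
    exact Finset.filter_congr fun i _ => forall₂_congr fun j _ =>
      coe_le_mul_elimRho_succ_iff hs _ 2
  have hdev := fun i => abs_le.mp (hgood i)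
  refine ⟨?_, fun i hi => ?_⟩
  · rw [hS, Finset.mem_filter]
    refine ⟨hmem, fun j _ => ?_⟩
    linarith [hstar j, hdev j, hdev iStar]
  · rw [hS, Finset.mem_filter] at hi
    have hcond := hi.2 iStar hmem
    refine (coe_le_mul_elimRho_succ_iff hs _ 4).mpr ?_
    linarith [hdev i, hdev iStar]

lemma elimNice_of_forall_abs_empMean_sub_le {K T : ℕ} {X : ℕ → Fin K → ℝ} {μ : Fin K → ℝ}
    {iStar : Fin K} (hstar : ∀ i, μ i ≤ μ iStar) {t : ℕ}
    (hgood : ∀ s ∈ Finset.Ico 1 t, ∀ i, |empMean X s i - μ i| ≤ elimRadius K T s) :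
    ∀ s ∈ Finset.Icc 1 t, ElimNice K T X μ iStar s := by
  intro s hs
  obtain ⟨hs1, hst⟩ := Finset.mem_Icc.mp hs
  clear hs
  induction s, hs1 using Nat.le_induction with
  | base => exact elimNice_one K T X μ iStar
  | succ s hs1 ih =>
    exact elimNice_succ hstar hs1 (ih (by omega)).1 (hgood s (Finset.mem_Ico.mpr ⟨hs1, hst⟩))

lemma measureReal_elimRadius_lt_abs_empMean_sub_le {K T : ℕ} (hK : 0 < K)
    {ν : Measure (Fin K → ℝ)} [IsProbabilityMeasure ν] {i : Fin K}
    (hsupp : ∀ᵐ x ∂ν, x i ∈ Set.Icc (0 : ℝ) 1) {s : ℕ} (hs1 : 1 ≤ s) (hsT : s < T) :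
    (Measure.pi fun _ : Fin T => ν).real
        {ω | elimRadius K T s < |empMean (extendRewards T ω) s i - ∫ x, x i ∂ν|}
      ≤ 2 / (K * T ^ 2) := by
  rw [← mul_one_div, ← exp_neg_two_mul_elimRadius_sq hK (by omega) hs1]
  exact measureReal_lt_abs_empMean_sub_le hsupp hsT.le hs1 (sqrt_nonneg _)

lemma sum_Ico_sum_two_div_le {K T t : ℕ} (hK : 0 < K) (ht : t ≤ T) :
    ∑ _s ∈ Finset.Ico 1 t, ∑ _i : Fin K, (2 / (K * T ^ 2) : ℝ) ≤ 2 / T := by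
  calc ∑ _s ∈ Finset.Ico 1 t, ∑ _i : Fin K, (2 / (K * T ^ 2) : ℝ)
      = (t - 1 : ℕ) * (2 / T ^ 2 : ℝ) := by
        simp only [Finset.sum_const, Nat.card_Ico, Finset.card_univ, Fintype.card_fin,
          nsmul_eq_mul]
        field_simp
    _ ≤ T * (2 / T ^ 2) := by gcongr; omega
    _ = 2 / T := by
        rcases eq_or_ne (T : ℝ) 0 with hT | hT
        · simp [hT]
        · field_simp

theorem procedure_nice_whp_general
    (K T : ℕ)
    (ν : Measure (Fin K → ℝ)) [IsProbabilityMeasure ν]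
    (hsupp : ∀ᵐ x ∂ν, ∀ i, x i ∈ Set.Icc (0 : ℝ) 1)
    (μ : Fin K → ℝ) (hμ : ∀ i, μ i = ∫ x, x i ∂ν)
    (iStar : Fin K) (hstar : ∀ i, μ i ≤ μ iStar)
    (t : ℕ) (ht2 : t ≤ T) :
    (Measure.pi fun _ : Fin T => ν)
      {ω | ¬ ∀ s ∈ Finset.Icc 1 t,
          iStar ∈ elimS K T (extendRewards T ω) s ∧
          ∀ i ∈ elimS K T (extendRewards T ω) s,
            ((μ iStar - μ i : ℝ) : EReal) ≤ 4 * elimRho K T s}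
      ≤ ENNReal.ofReal (2 / (T : ℝ)) := by
  set P := Measure.pi fun _ : Fin T => ν
  have : IsProbabilityMeasure P := by unfold P; infer_instance
  have h_sub : {ω | ¬ ∀ s ∈ Finset.Icc 1 t, ElimNice K T (extendRewards T ω) μ iStar s}
      ⊆ ⋃ s ∈ Finset.Ico 1 t, ⋃ i,
        {ω | elimRadius K T s < |empMean (extendRewards T ω) s i - μ i|} := by
    intro ω hω
    by_contra h_out
    simp only [Set.mem_iUnion, Set.mem_ofPred_eq, not_exists, not_lt] at h_out
    exact hω (elimNice_of_forall_abs_empMean_sub_le hstar h_out)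
  rw [← ENNReal.ofReal_toReal (measure_ne_top P _)]
  refine ENNReal.ofReal_le_ofReal ?_
  calc P.real _ ≤ ∑ s ∈ Finset.Ico 1 t, ∑ i, P.real
        {ω | elimRadius K T s < |empMean (extendRewards T ω) s i - μ i|} :=
        (measureReal_mono h_sub (measure_ne_top _ _)).trans <|
          (measureReal_biUnion_finset_le _ _).trans <|
          Finset.sum_le_sum fun s _ => measureReal_iUnion_fintype_le _
    _ ≤ ∑ _s ∈ Finset.Ico 1 t, ∑ _i : Fin K, 2 / (K * T ^ 2 : ℝ) := by
        gcongr with s hs i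
        obtain ⟨hs1, hst⟩ := Finset.mem_Ico.mp hs
        rw [hμ i]
        exact measureReal_elimRadius_lt_abs_empMean_sub_le (Fin.pos iStar)
          (hsupp.mono fun x hx => hx i) hs1 (by omega)
    _ ≤ 2 / T := sum_Ico_sum_two_div_le (Fin.pos iStar) ht2

/-- **The procedure is nice at all rounds with high probability.** In the ELIM
algorithm with horizon `T` on `K ≥ 1` arms, let `N_s^p` be the event that the best arm
`iStar` belongs to `S_s` and every arm `i ∈ S_s` satisfies `μ_{i*} - μ_i ≤ 4 ρ_s`, and
let `M_t = ∩_{s=1}^t N_s^p`.  Then for every `1 ≤ t ≤ T`, `Pr{¬ M_t} ≤ 2 / T`. -/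
theorem procedure_nice_whp
    (K T : ℕ) [NeZero K] (hT : 1 ≤ T)
    (ν : Measure (Fin K → ℝ)) [IsProbabilityMeasure ν]
    (hsupp : ∀ᵐ x ∂ν, ∀ i, x i ∈ Set.Icc (0 : ℝ) 1)
    (μ : Fin K → ℝ) (hμ : ∀ i, μ i = ∫ x, x i ∂ν)
    (iStar : Fin K) (hstar : ∀ i, μ i ≤ μ iStar)
    (t : ℕ) (ht1 : 1 ≤ t) (ht2 : t ≤ T) :
    (Measure.pi fun _ : Fin T => ν)
      {ω | ¬ ∀ s ∈ Finset.Icc 1 t,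
          iStar ∈ elimS K T (extendRewards T ω) s ∧
          ∀ i ∈ elimS K T (extendRewards T ω) s,
            ((μ iStar - μ i : ℝ) : EReal) ≤ 4 * elimRho K T s}
      ≤ ENNReal.ofReal (2 / (T : ℝ)) :=
  procedure_nice_whp_general K T ν hsupp μ hμ iStar hstar t ht2
end
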